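/- Let π(u,v) = (u = x_0, …, x_ℓ = v) be a shortest u–v path in G ∪ G^(k) with the minimum number of edges, where all edges have finite weight. Then for every index i with 0 ≤ i ≤ ℓ/4 − 1 and every vertex y with y ∈ S[k](x_{4i}), we have d_G(x_{4i}, y) ≤ d_G(x_{4i}, x_{4i+2}); moreover x_{4i+2} ∉ S[k](x_{4i}). -/

import Mathlib

open scoped ENNReal

namespace Stmt2

variable {V : Type*}

/-- Endpoint of a walk starting at `u` with subsequent vertices given by the list. -/
def last : V → List V → V
  | u, [] => u
  | _, x :: xs => last x xs

/-- Weight of a walk starting at `u` with subsequent vertices given by the list. -/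
noncomputable def cost (w : V → V → ℝ≥0∞) : V → List V → ℝ≥0∞
  | _, [] => 0
  | u, x :: xs => w u x + cost w x xs

/-- `h`-hop-limited distance from `u` to `v` (non-edges have weight `⊤`). -/
noncomputable def hdist (w : V → V → ℝ≥0∞) (h : ℕ) (u v : V) : ℝ≥0∞ :=
  ⨅ p ∈ {p : List V | p.length ≤ h ∧ last u p = v}, cost w u p

/-- Shortest-path distance from `u` to `v`. -/
noncomputable def dist (w : V → V → ℝ≥0∞) (u v : V) : ℝ≥0∞ :=
  ⨅ h : ℕ, hdist w h u v

/-- `S` is a set of (at most) `k` closest reachable vertices to `v` (excluding `v`),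
with ties broken arbitrarily: members of `S` are reachable and distinct from `v`,
`|S| ≤ k`, every member is at least as close as every reachable non-member, and `S`
has exactly `k` elements unless it already contains all reachable vertices. -/
def IsKClosest [Fintype V] (w : V → V → ℝ≥0∞) (k : ℕ) (v : V) (S : Finset V) : Prop :=
  (∀ u ∈ S, u ≠ v ∧ dist w v u < ⊤) ∧ S.card ≤ k ∧
  (∀ y ∈ S, ∀ z, z ∉ S → z ≠ v → dist w v z < ⊤ → dist w v y ≤ dist w v z) ∧
  (∀ z, z ∉ S → z ≠ v → dist w v z < ⊤ → S.card = k)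

/-- Weight function of the union `G ∪ G^(k)` of the graph with the `k`-shortcut hopset:
hopset edges `(u,v)` (present when `u ∈ S v` or `v ∈ S u`) get weight `d_G(u,v)`. -/
noncomputable def unionW [Fintype V] [DecidableEq V] (w : V → V → ℝ≥0∞) (S : V → Finset V)
    (u v : V) : ℝ≥0∞ :=
  if u ∈ S v ∨ v ∈ S u then min (w u v) (dist w u v) else w u v

/-!
If `x_{4i+2}` were `x_{4i}` itself or a member of `S[k](x_{4i})`, the empty walk or the hopset
edge `(x_{4i}, x_{4i+2})`, whose weight `d_G(x_{4i}, x_{4i+2})` is at most the total weight of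
the two edges `x_{4i} x_{4i+1} x_{4i+2}`, would replace them without raising the weight of the
path, against the minimality of the number of hops. So `x_{4i+2}` is a reachable vertex outside
`S[k](x_{4i})`, and every member of `S[k](x_{4i})` is at least as close.
-/

lemma last_append (u : V) (p q : List V) : last u (p ++ q) = last (last u p) q := by
  induction p generalizing u with
  | nil => rfl
  | cons x xs ih => exact ih x

lemma cost_append (w : V → V → ℝ≥0∞) (u : V) (p q : List V) :
    cost w u (p ++ q) = cost w u p + cost w (last u p) q := by
  induction p generalizing u with
  | nil => simp [cost, last]
  | cons x xs ih => simp [cost, last, ih, add_assoc]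

lemma getD_cons_append_length (u d : V) (p q : List V) :
    (u :: (p ++ q)).getD p.length d = last u p := by
  induction p generalizing u with
  | nil => rfl
  | cons x xs ih => exact ih x

lemma exists_eq_append_cons_cons {p : List V} {n : ℕ} (h : n + 2 ≤ p.length) :
    ∃ pre b c rest, p = pre ++ b :: c :: rest ∧ pre.length = n := by
  refine ⟨p.take n, p[n], p[n + 1], p.drop (n + 2), ?_, by simp; omega⟩
  rw [← List.drop_eq_getElem_cons, ← List.drop_eq_getElem_cons, List.take_append_drop]

section Distance

variable (w : V → V → ℝ≥0∞)

lemma dist_le_cost {u v : V} {p : List V} (h : last u p = v) : dist w u v ≤ cost w u p :=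
  iInf_le_of_le p.length (iInf₂_le p ⟨le_rfl, h⟩)

lemma dist_eq_iInf_cost (u v : V) :
    dist w u v = ⨅ p : {p : List V // last u p = v}, cost w u p :=
  le_antisymm (le_iInf fun p => dist_le_cost w p.2)
    (le_iInf fun _ => le_iInf₂ fun p hp => iInf_le_of_le ⟨p, hp.2⟩ le_rfl)

lemma dist_le_weight (u v : V) : dist w u v ≤ w u v :=
  (dist_le_cost w (v := v) (p := [v]) rfl).trans_eq (by simp [cost])

lemma dist_triangle (a b c : V) : dist w a c ≤ dist w a b + dist w b c :=
  calc dist w a c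
      ≤ ⨅ (p : {p : List V // last a p = b}) (q : {q : List V // last b q = c}),
          cost w a p + cost w b q :=
        le_iInf₂ fun p q => (dist_le_cost w (p := p.1 ++ q.1) (by
          rw [last_append, p.2, q.2])).trans_eq (by rw [cost_append, p.2])
    _ = dist w a b + dist w b c := by
        simp_rw [dist_eq_iInf_cost, ENNReal.iInf_add, ENNReal.add_iInf]

end Distance

def IsMinHopShortest (W : V → V → ℝ≥0∞) (u v : V) (p : List V) : Prop :=
  last u p = v ∧ cost W u p = dist W u v ∧
    ∀ q : List V, last u q = v → cost W u q = cost W u p → p.length ≤ q.length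

namespace IsMinHopShortest

variable {W : V → V → ℝ≥0∞} {u v : V} {pre rest : List V}

lemma length_le_of_cost_le (hp : IsMinHopShortest W u v (pre ++ rest)) {q : List V}
    (hq : last (last u pre) q = v) (hcost : cost W (last u pre) q ≤ cost W (last u pre) rest) :
    rest.length ≤ q.length := by
  obtain ⟨-, hmincost, hminhops⟩ := hp
  have hlast : last u (pre ++ q) = v := by rw [last_append, hq]
  have hle : cost W u (pre ++ q) ≤ cost W u (pre ++ rest) := by
    rw [cost_append, cost_append]
    gcongr
  have hge : cost W u (pre ++ rest) ≤ cost W u (pre ++ q) := hmincost ▸ dist_le_cost W hlast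
  simpa using hminhops _ hlast (le_antisymm hle hge)

lemma two_le_length_of_cost_le {b c : V} (hp : IsMinHopShortest W u v (pre ++ b :: c :: rest))
    {s : List V} (hs : last (last u pre) s = c)
    (hcost : cost W (last u pre) s ≤ W (last u pre) b + W b c) :
    2 ≤ s.length := by
  have hrest : last c rest = v := by simpa [last_append, last] using hp.1
  have := hp.length_le_of_cost_le (q := s ++ rest) (by rw [last_append, hs, hrest]) (by
    rw [cost_append, hs, cost, cost, ← add_assoc]
    gcongr)
  simp at this
  omega

lemma ne_of_two_hops {b c : V} (hp : IsMinHopShortest W u v (pre ++ b :: c :: rest)) :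
    c ≠ last u pre := by
  intro hc
  have := hp.two_le_length_of_cost_le (s := []) hc.symm (by simp [cost])
  simp at this

end IsMinHopShortest

section Hopset

variable [Fintype V] [DecidableEq V] {w : V → V → ℝ≥0∞} {S : V → Finset V} {u v b c : V}
  {pre rest : List V}

lemma dist_le_unionW (u v : V) : dist w u v ≤ unionW w S u v := by
  unfold unionW
  split_ifs
  · exact le_min (dist_le_weight w u v) le_rfl
  · exact dist_le_weight w u v

lemma unionW_le_dist_of_mem (h : v ∈ S u) : unionW w S u v ≤ dist w u v := by
  rw [unionW, if_pos (Or.inr h)]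
  exact min_le_right _ _

lemma dist_le_unionW_add_unionW (a b c : V) :
    dist w a c ≤ unionW w S a b + unionW w S b c :=
  (dist_triangle w a b c).trans (add_le_add (dist_le_unionW a b) (dist_le_unionW b c))

lemma IsMinHopShortest.not_mem_of_two_hops
    (hp : IsMinHopShortest (unionW w S) u v (pre ++ b :: c :: rest)) : c ∉ S (last u pre) := by
  intro hc
  have := hp.two_le_length_of_cost_le (s := [c]) rfl (by
    rw [cost, cost, add_zero]
    exact (unionW_le_dist_of_mem hc).trans (dist_le_unionW_add_unionW _ b c))
  simp at this

lemma dist_lt_top_of_two_hops (h : cost (unionW w S) u (pre ++ b :: c :: rest) < ⊤) :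
    dist w (last u pre) c < ⊤ := by
  refine (dist_le_unionW_add_unionW (S := S) _ b c).trans_lt (lt_of_le_of_lt ?_ h)
  rw [cost_append, cost, cost, ← add_assoc (unionW w S _ b)]
  exact le_add_left le_self_add

end Hopset

theorem kclosest_within_two_hops_general [Fintype V] [DecidableEq V]
    (w : V → V → ℝ≥0∞)
    (k : ℕ)
    (S : V → Finset V) (hS : ∀ v, IsKClosest w k v (S v))
    (u v : V) (p : List V)
    (hlast : last u p = v)
    (hfin : cost (unionW w S) u p < ⊤)
    (hmincost : cost (unionW w S) u p = dist (unionW w S) u v)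
    (hminhops : ∀ q : List V, last u q = v →
      cost (unionW w S) u q = cost (unionW w S) u p → p.length ≤ q.length)
    (i : ℕ) (hi : 4 * i + 4 ≤ p.length) :
    (∀ y ∈ S ((u :: p).getD (4 * i) u),
      dist w ((u :: p).getD (4 * i) u) y ≤
        dist w ((u :: p).getD (4 * i) u) ((u :: p).getD (4 * i + 2) u)) ∧
    ((u :: p).getD (4 * i + 2) u) ∉ S ((u :: p).getD (4 * i) u) := by
  obtain ⟨pre, b, c, rest, rfl, hpre⟩ := exists_eq_append_cons_cons (p := p) (n := 4 * i) (by omega)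
  have hp : IsMinHopShortest (unionW w S) u v (pre ++ b :: c :: rest) :=
    ⟨hlast, hmincost, hminhops⟩
  have hc : (u :: (pre ++ b :: c :: rest)).getD (pre.length + 2) u = c := by simp
  rw [← hpre, getD_cons_append_length, hc]
  have hnot := hp.not_mem_of_two_hops
  exact ⟨fun y hy => (hS _).2.2.1 y hy c hnot hp.ne_of_two_hops (dist_lt_top_of_two_hops hfin),
    hnot⟩

/-- Along a minimum-weight path in `G ∪ G^(k)` with the fewest edges, every member of
`S[k](x_{4i})` is at distance (in `G`) at most `d_G(x_{4i}, x_{4i+2})` from `x_{4i}`;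
moreover `x_{4i+2} ∉ S[k](x_{4i})`. -/
theorem kclosest_within_two_hops [Fintype V] [DecidableEq V]
    (w : V → V → ℝ≥0∞) (hsymm : ∀ u v, w u v = w v u)
    (k : ℕ) (hk : 1 ≤ k)
    (S : V → Finset V) (hS : ∀ v, IsKClosest w k v (S v))
    (u v : V) (p : List V)
    (hlast : last u p = v)
    (hfin : cost (unionW w S) u p < ⊤)
    (hmincost : cost (unionW w S) u p = dist (unionW w S) u v)
    (hminhops : ∀ q : List V, last u q = v →
      cost (unionW w S) u q = cost (unionW w S) u p → p.length ≤ q.length)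
    (i : ℕ) (hi : 4 * i + 4 ≤ p.length) :
    (∀ y ∈ S ((u :: p).getD (4 * i) u),
      dist w ((u :: p).getD (4 * i) u) y ≤
        dist w ((u :: p).getD (4 * i) u) ((u :: p).getD (4 * i + 2) u)) ∧
    ((u :: p).getD (4 * i + 2) u) ∉ S ((u :: p).getD (4 * i) u) :=
  kclosest_within_two_hops_general w k S hS u v p hlast hfin hmincost hminhops i hi

end Stmt2
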